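/- Let H be a standard subspace and U a unitary with UH ⊆ H. Define B_U := U* Δ_H^{1/2} on Dom(Δ_H^{1/2}). Then B_U is symmetric (B_U ⊆ B_U*) if and only if U = J_H U* J_H. -/

import Mathlib

open Complex Submodule Filter Topology

variable {E : Type*} [NormedAddCommGroup E] [InnerProductSpace ℂ E]

/-- Multiplication by `i` as a real-linear map. -/
noncomputable def mulI (E : Type*) [NormedAddCommGroup E] [InnerProductSpace ℂ E] :
    E →ₗ[ℝ] E where
  toFun x := (Complex.I : ℂ) • x
  map_add' := fun x y => smul_add Complex.I x y
  map_smul' := fun r x => smul_comm Complex.I r x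

/-- `H + iH` as a real submodule. -/
noncomputable def cspan (H : Submodule ℝ E) : Submodule ℝ E := H ⊔ H.map (mulI E)

/-- The symplectic complement `K' = {v : Im ⟨v, k⟩ = 0 ∀ k ∈ K}`. -/
noncomputable def sympl (K : Submodule ℝ E) : Submodule ℝ E where
  carrier := {v : E | ∀ k ∈ K, (inner ℂ v k : ℂ).im = 0}
  add_mem' := by
    intro a b ha hb k hk
    simp only [Set.mem_setOf_eq] at *
    rw [inner_add_left, Complex.add_im, ha k hk, hb k hk, add_zero]
  zero_mem' := by intro k hk; simp
  smul_mem' := by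
    intro c v hv k hk
    simp only [Set.mem_setOf_eq] at *
    have h : (c • v : E) = ((c : ℂ)) • v := by
      simp [Complex.coe_smul]
    rw [h, inner_smul_left]
    simp [hv k hk]

/-- The real-orthogonal complement `{v : Re ⟨v, k⟩ = 0 ∀ k ∈ K}`. -/
noncomputable def realPerp (K : Submodule ℝ E) : Submodule ℝ E where
  carrier := {v : E | ∀ k ∈ K, (inner ℂ v k : ℂ).re = 0}
  add_mem' := by
    intro a b ha hb k hk
    simp only [Set.mem_setOf_eq] at *
    rw [inner_add_left, Complex.add_re, ha k hk, hb k hk, add_zero]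
  zero_mem' := by intro k hk; simp
  smul_mem' := by
    intro c v hv k hk
    simp only [Set.mem_setOf_eq] at *
    have h : (c • v : E) = ((c : ℂ)) • v := by
      simp [Complex.coe_smul]
    rw [h, inner_smul_left]
    simp [hv k hk]

/-- A standard subspace: closed, cyclic and separating real subspace. -/
structure IsStandardSubspace (H : Submodule ℝ E) : Prop where
  isClosed : IsClosed (H : Set E)
  cyclic : Dense ((cspan H : Submodule ℝ E) : Set E)
  separating : H ⊓ H.map (mulI E) = ⊥

/-- Scalar multiplication by a complex number as a real-linear map. -/
noncomputable def smulC (E : Type*) [NormedAddCommGroup E] [InnerProductSpace ℂ E]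
    (mu : ℂ) : E →ₗ[ℝ] E where
  toFun x := mu • x
  map_add' := fun x y => smul_add mu x y
  map_smul' := fun r x => smul_comm mu r x

/-! On `D = H + iH` write `Δ_H^{1/2} = J S`. Since `U` is complex linear and `UH ⊆ H`, `U` maps `D`
into itself and commutes with `S` there. If `B_U` is symmetric, then for `w ∈ D` the vectors
`U* J S w` and `J U S w` have the same inner products with the dense subspace `D`, so they agree;
as `S` maps `D` onto itself, `U* J = J U` on `D`, hence everywhere by continuity, which is
`U = J U* J`. Conversely, `U* J = J U` turns `B_U` into `Δ_H^{1/2} U`, whose symmetry on `D` is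
that of `Δ_H^{1/2}`. -/

def IsTomitaOperator (H : Submodule ℝ E) (S : E → E) : Prop :=
  ∀ h₁ ∈ H, ∀ h₂ ∈ H, S (h₁ + Complex.I • h₂) = h₁ - Complex.I • h₂

theorem mem_cspan_iff {H : Submodule ℝ E} {v : E} :
    v ∈ cspan H ↔ ∃ h₁ ∈ H, ∃ h₂ ∈ H, v = h₁ + Complex.I • h₂ := by
  constructor
  · intro hv
    obtain ⟨h₁, hh₁, _, ⟨h₂, hh₂, rfl⟩, rfl⟩ := Submodule.mem_sup.mp hv
    exact ⟨h₁, hh₁, h₂, hh₂, rfl⟩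
  · rintro ⟨h₁, hh₁, h₂, hh₂, rfl⟩
    exact Submodule.mem_sup.mpr ⟨h₁, hh₁, Complex.I • h₂, ⟨h₂, hh₂, rfl⟩, rfl⟩

theorem map_mem_cspan {F : Type*} [FunLike F E E] [LinearMapClass F ℂ E E] {H : Submodule ℝ E}
    (f : F) (hf : ∀ h ∈ H, f h ∈ H) {v : E} (hv : v ∈ cspan H) : f v ∈ cspan H := by
  obtain ⟨h₁, hh₁, h₂, hh₂, rfl⟩ := mem_cspan_iff.mp hv
  rw [map_add, map_smul]
  exact mem_cspan_iff.mpr ⟨f h₁, hf h₁ hh₁, f h₂, hf h₂ hh₂, rfl⟩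

namespace IsTomitaOperator

variable {H : Submodule ℝ E} {S : E → E} {v : E}

theorem apply_mem_cspan (hS : IsTomitaOperator H S) (hv : v ∈ cspan H) : S v ∈ cspan H := by
  obtain ⟨h₁, hh₁, h₂, hh₂, rfl⟩ := mem_cspan_iff.mp hv
  rw [hS h₁ hh₁ h₂ hh₂, sub_eq_add_neg, ← smul_neg]
  exact mem_cspan_iff.mpr ⟨h₁, hh₁, -h₂, neg_mem hh₂, rfl⟩

theorem apply_apply (hS : IsTomitaOperator H S) (hv : v ∈ cspan H) : S (S v) = v := by
  obtain ⟨h₁, hh₁, h₂, hh₂, rfl⟩ := mem_cspan_iff.mp hv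
  rw [hS h₁ hh₁ h₂ hh₂, sub_eq_add_neg, ← smul_neg, hS h₁ hh₁ (-h₂) (neg_mem hh₂), smul_neg,
    sub_neg_eq_add]

theorem apply_map {F : Type*} [FunLike F E E] [LinearMapClass F ℂ E E]
    (hS : IsTomitaOperator H S) (f : F) (hf : ∀ h ∈ H, f h ∈ H) (hv : v ∈ cspan H) :
    S (f v) = f (S v) := by
  obtain ⟨h₁, hh₁, h₂, hh₂, rfl⟩ := mem_cspan_iff.mp hv
  rw [map_add, map_smul, hS _ (hf h₁ hh₁) _ (hf h₂ hh₂), hS h₁ hh₁ h₂ hh₂, map_sub, map_smul]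

end IsTomitaOperator

theorem isometry_of_inner_map_map {J : E → E} (hJadd : ∀ x y : E, J (x + y) = J x + J y)
    (hJinner : ∀ x y : E, (inner ℂ (J x) (J y) : ℂ) = inner ℂ y x) : Isometry J :=
  AddMonoidHomClass.isometry_of_norm (AddMonoidHom.mk' J hJadd) fun x => by
    rw [AddMonoidHom.mk'_apply, @norm_eq_sqrt_re_inner ℂ, @norm_eq_sqrt_re_inner ℂ, hJinner]

theorem eq_conj_symm_conj_iff {α : Type*} {J : α → α} (hJ : Function.Involutive J)
    (U : α ≃ α) : (∀ x, U x = J (U.symm (J x))) ↔ ∀ x, U.symm (J x) = J (U x) := by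
  constructor
  · intro h x
    rw [Equiv.symm_apply_eq, h, hJ, Equiv.symm_apply_apply]
  · intro h x
    rw [h, hJ]

section SymmetricBU

variable {H : Submodule ℝ E} {S J : E → E}

theorem symm_conj_eq_conj_of_symmetric (hD : Dense (cspan H : Set E))
    (hS : IsTomitaOperator H S) (hJadd : ∀ x y : E, J (x + y) = J x + J y)
    (hJinner : ∀ x y : E, (inner ℂ (J x) (J y) : ℂ) = inner ℂ y x)
    (hsymm : ∀ v ∈ cspan H, ∀ w ∈ cspan H, (inner ℂ (J (S v)) w : ℂ) = inner ℂ v (J (S w)))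
    (U : E ≃ₗᵢ[ℂ] E) (hUH : ∀ h ∈ H, U h ∈ H)
    (hB : ∀ v ∈ cspan H, ∀ w ∈ cspan H,
      (inner ℂ (U.symm (J (S v))) w : ℂ) = inner ℂ v (U.symm (J (S w))))
    (x : E) : U.symm (J x) = J (U x) := by
  have hdom : ∀ w ∈ cspan H, U.symm (J (S w)) = J (U (S w)) := fun w hw =>
    hD.eq_of_inner_right ℂ fun v hv => calc
      (inner ℂ v (U.symm (J (S w))) : ℂ) = inner ℂ (U.symm (J (S v))) w := (hB v hv w hw).symm
      _ = inner ℂ (J (S v)) (U w) := by rw [← U.inner_map_map, U.apply_symm_apply]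
      _ = inner ℂ v (J (S (U w))) := hsymm v hv _ (map_mem_cspan U hUH hw)
      _ = inner ℂ v (J (U (S w))) := by rw [hS.apply_map U hUH hw]
  have hJ := (isometry_of_inner_map_map hJadd hJinner).continuous
  refine congrFun ((U.symm.continuous.comp hJ).ext_on hD (hJ.comp U.continuous) fun u hu => ?_) x
  simpa only [Function.comp_apply, hS.apply_apply hu] using hdom (S u) (hS.apply_mem_cspan hu)

theorem symmetric_of_symm_conj_eq_conj (hS : IsTomitaOperator H S)
    (hsymm : ∀ v ∈ cspan H, ∀ w ∈ cspan H, (inner ℂ (J (S v)) w : ℂ) = inner ℂ v (J (S w)))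
    (U : E ≃ₗᵢ[ℂ] E) (hUH : ∀ h ∈ H, U h ∈ H) (hUJ : ∀ x, U.symm (J x) = J (U x))
    {v w : E} (hv : v ∈ cspan H) (hw : w ∈ cspan H) :
    (inner ℂ (U.symm (J (S v))) w : ℂ) = inner ℂ v (U.symm (J (S w))) := calc
  (inner ℂ (U.symm (J (S v))) w : ℂ) = inner ℂ (J (S (U v))) w := by
      rw [hUJ, hS.apply_map U hUH hv]
  _ = inner ℂ (U v) (J (S w)) := hsymm _ (map_mem_cspan U hUH hv) w hw
  _ = inner ℂ v (U.symm (J (S w))) := by rw [← U.inner_map_map v, U.apply_symm_apply]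

end SymmetricBU

theorem stmt16_general {E : Type*} [NormedAddCommGroup E] [InnerProductSpace ℂ E]
    (H : Submodule ℝ E) (hH : IsStandardSubspace H)
    (S : E → E)
    (hS : ∀ h₁ ∈ H, ∀ h₂ ∈ H, S (h₁ + Complex.I • h₂) = h₁ - Complex.I • h₂)
    (J : E → E)
    (hJadd : ∀ x y : E, J (x + y) = J x + J y)
    (hJinv : ∀ x : E, J (J x) = x)
    (hJinner : ∀ x y : E, (inner ℂ (J x) (J y) : ℂ) = inner ℂ y x)
    (hsymm : ∀ v ∈ (cspan H : Submodule ℝ E), ∀ w ∈ (cspan H : Submodule ℝ E),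
        (inner ℂ (J (S v)) w : ℂ) = inner ℂ v (J (S w)))
    (U : E ≃ₗᵢ[ℂ] E) (hUH : ∀ h ∈ H, U h ∈ H) :
    (∀ v ∈ (cspan H : Submodule ℝ E), ∀ w ∈ (cspan H : Submodule ℝ E),
        (inner ℂ (U.symm (J (S v))) w : ℂ) = inner ℂ v (U.symm (J (S w))))
      ↔ (∀ x : E, U x = J (U.symm (J x))) :=
  ⟨fun hB => (eq_conj_symm_conj_iff hJinv U.toEquiv).mpr
      (symm_conj_eq_conj_of_symmetric hH.cyclic hS hJadd hJinner hsymm U hUH hB),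
    fun hU _ hv _ hw => symmetric_of_symm_conj_eq_conj hS hsymm U hUH
      ((eq_conj_symm_conj_iff hJinv U.toEquiv).mp hU) hv hw⟩

/-- For a unitary `U` with `UH ⊆ H`, the operator `B_U = U* Δ_H^{1/2}` (here
`Δ_H^{1/2} = J ∘ S`, pinned down as the positive selfadjoint factor in the polar
decomposition of `S`) is symmetric iff `U = J U* J`. -/
theorem stmt16 {E : Type*} [NormedAddCommGroup E] [InnerProductSpace ℂ E] [CompleteSpace E]
    (H : Submodule ℝ E) (hH : IsStandardSubspace H)
    (S : E → E)
    (hS : ∀ h₁ ∈ H, ∀ h₂ ∈ H, S (h₁ + Complex.I • h₂) = h₁ - Complex.I • h₂)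
    (J : E → E)
    (hJadd : ∀ x y : E, J (x + y) = J x + J y)
    (hJsmul : ∀ (c : ℂ) (x : E), J (c • x) = (starRingEnd ℂ) c • J x)
    (hJinv : ∀ x : E, J (J x) = x)
    (hJinner : ∀ x y : E, (inner ℂ (J x) (J y) : ℂ) = inner ℂ y x)
    (hpos : ∀ v ∈ (cspan H : Submodule ℝ E),
        0 ≤ (inner ℂ v (J (S v)) : ℂ).re ∧ (inner ℂ v (J (S v)) : ℂ).im = 0)
    (hsymm : ∀ v ∈ (cspan H : Submodule ℝ E), ∀ w ∈ (cspan H : Submodule ℝ E),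
        (inner ℂ (J (S v)) w : ℂ) = inner ℂ v (J (S w)))
    (hran : ∀ w : E, ∃ v ∈ (cspan H : Submodule ℝ E), v + J (S v) = w)
    (U : E ≃ₗᵢ[ℂ] E) (hUH : ∀ h ∈ H, U h ∈ H) :
    (∀ v ∈ (cspan H : Submodule ℝ E), ∀ w ∈ (cspan H : Submodule ℝ E),
        (inner ℂ (U.symm (J (S v))) w : ℂ) = inner ℂ v (U.symm (J (S w))))
      ↔ (∀ x : E, U x = J (U.symm (J x))) :=
  stmt16_general H hH S hS J hJadd hJinv hJinner hsymm U hUH
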